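/- For all integers n ≥ 1 and k ≥ 1, one has s_{n+k}/(ε^k · s_n) < 1 − k/(2n) + ((3/8)k² + (19/72 − S)k)/n² + 1.2·k⁶/n³. -/

import Mathlib

/-!
Since `s (j + 1) = ε · s j · r j` with
`r x = stepRatio x = (x+1/6)(x+1/2)(x+5/6)(x+1+S) / ((x+1)³(x+S))`, the ratio to bound is
`P = r n ⋯ r (n+k-1)`. The rational function `Q x = potential x = (x² + αx + β)/(x − 1/40)`,
asymptotic to `x`, satisfies `r(x)² Q(x+1) ≤ Q x` for `x ≥ 1`; telescoping gives
`P² Q(n+k) ≤ Q n`, and the polynomial inequality `Q n < B² Q(n+k)`, with `B = ratioBound n k`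
the right-hand side, yields `P < B`. After substituting `x = 1 + t`, resp. `n = 1 + a` and
`k = 1 + b`, both polynomial inequalities only have positive coefficients.
-/

open Real Filter

/-- `S = 13591409/545140134` from the Chudnovsky series. -/
noncomputable def S : ℝ := 13591409 / 545140134

/-- `ε = 1728/640320³ = 53360⁻³`. -/
noncomputable def eps : ℝ := 1728 / 640320 ^ 3

/-- The terms `s_k = (6k)!/((3k)!·(k!)³) · (k+S)/640320^{3k}` of the Chudnovsky series. -/
noncomputable def s (k : ℕ) : ℝ :=
  (Nat.factorial (6 * k) : ℝ) / ((Nat.factorial (3 * k) : ℝ) * (Nat.factorial k : ℝ) ^ 3)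
    * ((k : ℝ) + S) / 640320 ^ (3 * k)

open Finset NNReal

lemma S_pos : 0 < S := by unfold S; norm_num

lemma eps_pos : 0 < eps := by unfold eps; norm_num

lemma s_pos (k : ℕ) : 0 < s k := by
  unfold s
  have hS := S_pos
  positivity

noncomputable def stepRatio (x : ℝ) : ℝ :=
  (x + 1 / 6) * (x + 1 / 2) * (x + 5 / 6) * (x + 1 + S) / ((x + 1) ^ 3 * (x + S))

lemma s_succ (j : ℕ) : s (j + 1) = eps * s j * stepRatio j := by
  have h6 : ((6 * (j + 1)).factorial : ℝ) =
      (6 * j + 1) * (6 * j + 2) * (6 * j + 3) * (6 * j + 4) * (6 * j + 5) * (6 * j + 6) *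
        (6 * j).factorial := by
    rw [show 6 * (j + 1) = 6 * j + 5 + 1 by ring]
    simp only [Nat.factorial_succ]
    push_cast
    ring
  have h3 : ((3 * (j + 1)).factorial : ℝ) =
      (3 * j + 1) * (3 * j + 2) * (3 * j + 3) * (3 * j).factorial := by
    rw [show 3 * (j + 1) = 3 * j + 2 + 1 by ring]
    simp only [Nat.factorial_succ]
    push_cast
    ring
  have hS := S_pos
  unfold s eps stepRatio
  rw [h6, h3, Nat.factorial_succ, show 3 * (j + 1) = 3 * j + 3 by ring, pow_add]
  field_simp
  push_cast
  ring

lemma s_add (n k : ℕ) : s (n + k) = eps ^ k * s n * ∏ i ∈ range k, stepRatio (n + i) := by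
  induction k with
  | zero => simp
  | succ k ih =>
    rw [← add_assoc, s_succ, ih, prod_range_succ, pow_succ]
    push_cast
    ring

-- `α` and `β` are tuned so that `r(x)² Q(x+1) / Q x = 1 - c x⁻⁴ + O(x⁻⁵)`, `c ≈ 0.0037`.
noncomputable def potential (x : ℝ) : ℝ :=
  (x ^ 2 + 1646010181 / 3634267560 * x + 611440808026517879 / 5943555313950759120) / (x - 1 / 40)

lemma potential_pos {x : ℝ} (hx : 1 / 40 < x) : 0 < potential x := by
  unfold potential
  apply div_pos _ (by linarith)
  nlinarith [sq_nonneg (x + 1646010181 / 7268535120)]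

lemma exists_nnreal_eq_one_add {x : ℝ} (hx : 1 ≤ x) : ∃ t : ℝ≥0, x = 1 + t :=
  ⟨(x - 1).toNNReal, by rw [Real.coe_toNNReal _ (by linarith)]; ring⟩

lemma stepRatio_sq_mul_potential_succ_le {x : ℝ} (hx : 1 ≤ x) :
    stepRatio x ^ 2 * potential (x + 1) ≤ potential x := by
  obtain ⟨t, rfl⟩ := exists_nnreal_eq_one_add hx
  have hS := S_pos
  have ht := t.coe_nonneg
  unfold stepRatio potential
  rw [div_pow, div_mul_div_comm,
    div_le_div_iff₀ (mul_pos (by positivity) (by linarith)) (by linarith), ← sub_nonneg]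
  unfold S
  ring_nf
  positivity

lemma prod_stepRatio_sq_mul_potential_le {x : ℝ} (hx : 1 ≤ x) (k : ℕ) :
    (∏ i ∈ range k, stepRatio (x + i)) ^ 2 * potential (x + k) ≤ potential x := by
  induction k with
  | zero => simp
  | succ k ih =>
    calc (∏ i ∈ range (k + 1), stepRatio (x + i)) ^ 2 * potential (x + (k + 1 : ℕ))
        = (∏ i ∈ range k, stepRatio (x + i)) ^ 2 *
            (stepRatio (x + k) ^ 2 * potential (x + k + 1)) := by
          rw [prod_range_succ, Nat.cast_succ, ← add_assoc]; ring
      _ ≤ (∏ i ∈ range k, stepRatio (x + i)) ^ 2 * potential (x + k) := by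
          gcongr
          exact stepRatio_sq_mul_potential_succ_le (by linarith [k.cast_nonneg (α := ℝ)])
      _ ≤ potential x := ih

noncomputable def ratioBound (n k : ℝ) : ℝ :=
  1 - k / (2 * n) + ((3 / 8) * k ^ 2 + (19 / 72 - S) * k) / n ^ 2 + 1.2 * k ^ 6 / n ^ 3

lemma ratioBound_eq_div {n : ℝ} (hn : n ≠ 0) (k : ℝ) : ratioBound n k =
    (360 * n ^ 3 - 180 * k * n ^ 2 + (135 * k ^ 2 + (95 - 360 * S) * k) * n + 432 * k ^ 6) /
      (360 * n ^ 3) := by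
  unfold ratioBound
  field_simp
  ring

lemma ratioBound_pos {n k : ℝ} (hn : 0 < n) (hk : 0 ≤ k) : 0 < ratioBound n k := by
  rw [ratioBound_eq_div hn.ne']
  have hS : 0 < 95 - 360 * S := by unfold S; norm_num
  have hsq : 0 ≤ n * (k - 2 / 3 * n) ^ 2 := by positivity
  have hn3 : 0 < n ^ 3 := by positivity
  have hkn : 0 ≤ (95 - 360 * S) * k * n := by positivity
  have hk6 : 0 ≤ k ^ 6 := by positivity
  apply div_pos _ (by positivity)
  nlinarith

lemma potential_lt_ratioBound_sq_mul_potential {n k : ℝ} (hn : 1 ≤ n) (hk : 1 ≤ k) :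
    potential n < ratioBound n k ^ 2 * potential (n + k) := by
  obtain ⟨a, rfl⟩ := exists_nnreal_eq_one_add hn
  obtain ⟨b, rfl⟩ := exists_nnreal_eq_one_add hk
  have ha := a.coe_nonneg
  have hb := b.coe_nonneg
  rw [ratioBound_eq_div (by positivity)]
  unfold potential
  rw [div_pow, div_mul_div_comm,
    div_lt_div_iff₀ (by linarith) (mul_pos (by positivity) (by linarith)), ← sub_pos]
  unfold S
  ring_nf
  positivity

theorem ratio_power_upper_bound (n k : ℕ) (hn : 1 ≤ n) (hk : 1 ≤ k) :
    s (n + k) / (eps ^ k * s n) <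
      1 - (k : ℝ) / (2 * (n : ℝ)) +
        ((3 / 8) * (k : ℝ) ^ 2 + (19 / 72 - S) * (k : ℝ)) / (n : ℝ) ^ 2 +
        1.2 * (k : ℝ) ^ 6 / (n : ℝ) ^ 3 := by
  have hn : (1 : ℝ) ≤ n := by exact_mod_cast hn
  have hk : (1 : ℝ) ≤ k := by exact_mod_cast hk
  rw [s_add, mul_div_cancel_left₀ _ (mul_pos (pow_pos eps_pos k) (s_pos n)).ne']
  change _ < ratioBound n k
  have hsq : (∏ i ∈ range k, stepRatio (n + i)) ^ 2 < ratioBound n k ^ 2 :=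
    lt_of_mul_lt_mul_right
      ((prod_stepRatio_sq_mul_potential_le hn k).trans_lt
        (potential_lt_ratioBound_sq_mul_potential hn hk))
      (potential_pos (by linarith)).le
  exact lt_of_pow_lt_pow_left₀ 2 (ratioBound_pos (by linarith) (by linarith)).le hsq
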